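/- For any lattice path x ∈ L_{2k,k} \ D_{2k}^k, the position flipped by h applied to g(x) is strictly smaller than the position flipped by g applied to x, and neither x nor g(x) has a U-step touching the line y=1 at any position strictly between these two positions. -/

import Mathlib

/-- Value of a step: `true` = U-step (+1), `false` = D-step (-1). -/
def stepVal (b : Bool) : ℤ := if b then 1 else -1

/-- Height of the lattice path `x` after its first `i` steps. -/
def pathHeight (x : List Bool) (i : ℕ) : ℤ := ((x.take i).map stepVal).sum

/-- The step at position `i` (0-indexed) is a U-step. -/
def isU (x : List Bool) (i : ℕ) : Bool := x.getD i true

/-- The step at position `i` (0-indexed) is a D-step. -/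
def isD (x : List Bool) (i : ℕ) : Bool := !(x.getD i true)

/-- Number of flaws: D-steps lying below the line y=0 (i.e. starting at height ≤ 0). -/
def flaws (x : List Bool) : ℕ :=
  ((List.range x.length).filter (fun i => isD x i && decide (pathHeight x i ≤ 0))).length

/-- `DyckSet k e` = the set `D_{2k}^e` of Dyck paths with `2k` steps and `e` flaws. -/
def DyckSet (k e : ℕ) : Set (List Bool) :=
  {x | x.length = 2*k ∧ x.count true = k ∧ flaws x = e}

/-- `LSet k m` = the set `L_{2k,m}` of lattice paths with `2k` steps and `m` U-steps. -/
def LSet (k m : ℕ) : Set (List Bool) :=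
  {x | x.length = 2*k ∧ x.count true = m}

/-- `d_c(x)`: number of D-steps of `x` starting on the line `y = c`. -/
def dstart (x : List Bool) (c : ℤ) : ℕ :=
  ((List.range x.length).filter (fun i => isD x i && decide (pathHeight x i = c))).length

/-- `u_c(x)`: number of U-steps of `x` starting on the line `y = c`. -/
def ustart (x : List Bool) (c : ℤ) : ℕ :=
  ((List.range x.length).filter (fun i => isU x i && decide (pathHeight x i = c))).length

/-- Positions (in increasing order) of D-steps of `x` touching the line `y = c`
(a D-step at position `i` goes from height `pathHeight x i` down to `pathHeight x i - 1`,
so it touches `y = c` iff its start height is `c` or `c+1`). -/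
def dtouch (x : List Bool) (c : ℤ) : List ℕ :=
  (List.range x.length).filter
    (fun i => isD x i && (decide (pathHeight x i = c) || decide (pathHeight x i = c+1)))

/-- Positions (in increasing order) of U-steps of `x` touching the line `y = c`
(a U-step at position `i` goes from height `pathHeight x i` up to `pathHeight x i + 1`,
so it touches `y = c` iff its start height is `c` or `c-1`). -/
def utouch (x : List Bool) (c : ℤ) : List ℕ :=
  (List.range x.length).filter
    (fun i => isU x i && (decide (pathHeight x i = c) || decide (pathHeight x i = c-1)))

/-- Position (0-indexed) flipped by `g`: the `(d_0(x)+1)`-th D-step touching `y=0`. -/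
def gIdx (x : List Bool) : ℕ := (dtouch x 0).getD (dstart x 0) 0

/-- The map `g`: flip the `(d_0(x)+1)`-th D-step of `x` touching the line `y=0`. -/
def gMap (x : List Bool) : List Bool := x.set (gIdx x) true

/-- Position (0-indexed) flipped by `h`: the `u_1(x)`-th U-step touching `y=1`. -/
def hIdx (x : List Bool) : ℕ := (utouch x 1).getD (ustart x 1 - 1) 0

/-- The map `h`: flip the `u_1(x)`-th U-step of `x` touching the line `y=1`. -/
def hMap (x : List Bool) : List Bool := x.set (hIdx x) false

/-- Position (0-indexed) flipped by `g'`: the `d_0(x)`-th D-step touching `y=0`. -/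
def g'Idx (x : List Bool) : ℕ := (dtouch x 0).getD (dstart x 0 - 1) 0

/-- The map `g'`: flip the `d_0(x)`-th D-step of `x` touching the line `y=0`. -/
def g'Map (x : List Bool) : List Bool := x.set (g'Idx x) true

/-- Position (0-indexed) flipped by `h'`: the `(u_1(x)+1)`-th U-step touching `y=1`. -/
def h'Idx (x : List Bool) : ℕ := (utouch x 1).getD (ustart x 1) 0

/-- The map `h'`: flip the `(u_1(x)+1)`-th U-step of `x` touching the line `y=1`. -/
def h'Map (x : List Bool) : List Bool := x.set (h'Idx x) false

/-- The minimum-change map `f := h ∘ g`. -/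
def fMap (x : List Bool) : List Bool := hMap (gMap x)

/-- `piSeq n x`: the sequence of (1-indexed) positions flipped by the successive
applications `g, h, g, h, ...` over `n` applications of `f` starting from `x`. -/
def piSeq : ℕ → List Bool → List ℕ
  | 0, _ => []
  | n+1, x => (gIdx x + 1) :: (hIdx (gMap x) + 1) :: piSeq n (fMap x)

/-- Reverse the step sequence and complement every step. -/
def revComp (x : List Bool) : List Bool := x.reverse.map (fun b => !b)

/-! Let `p` be the position flipped by `g` (it exists because some D-step of `x` starts above
`y = 0`): a D-step from height `0` or `1`, preceded by exactly `d₀(x)` D-steps touching `y = 0`,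
i.e. by as many as there are D-steps from height `0` in all of `x`. Balancing up- and
down-crossings of the strip `[0, 1]` before `p` and of `[-1, 0]` after `p` (where `g` raises the
path by `2`) shows that exactly `u₁(g x) ≥ 1` U-steps of `g x` touching `y = 1` lie before `p`.
So `h` flips the last of them, and `x` and `g x` agree before `p`. -/

def countBefore (n : ℕ) (q : ℕ → Bool) : ℕ := ((List.range n).filter q).length

section countBefore

variable {m n : ℕ} {q q' : ℕ → Bool}

lemma countBefore_zero (q : ℕ → Bool) : countBefore 0 q = 0 := rfl

lemma countBefore_succ (n : ℕ) (q : ℕ → Bool) :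
    countBefore (n + 1) q = countBefore n q + (q n).toNat := by
  simp only [countBefore, List.range_succ, List.filter_append, List.length_append]
  cases h : q n <;> simp [h]

lemma countBefore_mono (h : m ≤ n) : countBefore m q ≤ countBefore n q :=
  ((List.range_sublist.2 h).filter q).length_le

lemma countBefore_congr (h : ∀ i < n, q i = q' i) : countBefore n q = countBefore n q' := by
  rw [countBefore, List.filter_congr fun i hi => h i (List.mem_range.1 hi), countBefore]

lemma countBefore_add_countBefore_of_eqOn_Ico (hmn : m ≤ n)
    (h : ∀ i, m ≤ i → i < n → q i = q' i) :
    countBefore n q + countBefore m q' = countBefore n q' + countBefore m q := by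
  induction n, hmn using Nat.le_induction with
  | base => omega
  | succ n hmn ih =>
    rw [countBefore_succ, countBefore_succ, h n hmn n.lt_succ_self]
    have := ih fun i h₁ h₂ => h i h₁ (by omega)
    omega

lemma countBefore_or (h : ∀ i, ¬(q i ∧ q' i)) :
    countBefore n (fun i => q i || q' i) = countBefore n q + countBefore n q' := by
  induction n with
  | zero => rfl
  | succ n ih =>
    rw [countBefore_succ, countBefore_succ, countBefore_succ, ih]
    have := h n
    cases hq : q n <;> cases hq' : q' n <;> simp_all <;> omega

lemma getD_filter_range_spec (q : ℕ → Bool) {j : ℕ} :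
    ∀ {n}, j < ((List.range n).filter q).length →
      ((List.range n).filter q).getD j 0 < n ∧ q (((List.range n).filter q).getD j 0) ∧
      countBefore (((List.range n).filter q).getD j 0) q = j
  | 0, hj => by simp at hj
  | n + 1, hj => by
    rw [List.range_succ, List.filter_append] at hj ⊢
    by_cases hq : q n
    · rw [List.filter_singleton, hq, cond_true] at hj ⊢
      rcases Nat.lt_or_ge j ((List.range n).filter q).length with h | h
      · rw [List.getD_append _ _ _ _ h]
        obtain ⟨h₁, h₂, h₃⟩ := getD_filter_range_spec q h
        exact ⟨by omega, h₂, h₃⟩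
      · have hj' : j = ((List.range n).filter q).length := by simp at hj; omega
        rw [List.getD_append_right _ _ _ _ h, hj']
        simp [hq, countBefore]
    · rw [List.filter_singleton, Bool.eq_false_iff.2 hq, cond_false, List.append_nil] at hj ⊢
      obtain ⟨h₁, h₂, h₃⟩ := getD_filter_range_spec q hj
      exact ⟨by omega, h₂, h₃⟩

lemma getD_filter_range_of_countBefore_eq {p j : ℕ} (hpn : p ≤ n)
    (hj : countBefore p q = j + 1) :
    ((List.range n).filter q).getD j 0 < p ∧
      ∀ i, ((List.range n).filter q).getD j 0 < i → i < p → q i = false := by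
  have hlen : j < ((List.range n).filter q).length := by
    have := countBefore_mono (q := q) hpn
    unfold countBefore at this hj; omega
  obtain ⟨-, hqe, hcount⟩ := getD_filter_range_spec q hlen
  set e := ((List.range n).filter q).getD j 0
  have hsucc : ∀ i, q i → countBefore (i + 1) q = countBefore i q + 1 := fun i hi => by
    rw [countBefore_succ, hi, Bool.toNat_true]
  have he : e < p := by
    by_contra! hpe
    have := countBefore_mono (q := q) hpe
    omega
  refine ⟨he, fun i hei hip => Bool.eq_false_iff.2 fun hqi => ?_⟩
  have := countBefore_mono (q := q) (show i + 1 ≤ p by omega)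
  have := countBefore_mono (q := q) (show e + 1 ≤ i by omega)
  have := hsucc i hqi
  have := hsucc e hqe
  omega

end countBefore

section Path

variable {x : List Bool} {m n : ℕ}

lemma isD_eq_not_isU (x : List Bool) (i : ℕ) : isD x i = !isU x i := rfl

lemma pathHeight_zero (x : List Bool) : pathHeight x 0 = 0 := rfl

lemma pathHeight_succ (hi : n < x.length) :
    pathHeight x (n + 1) = pathHeight x n + stepVal (isU x n) := by
  rw [pathHeight, List.take_add_one, List.getElem?_eq_getElem hi, Option.toList_some,
    List.map_append, List.sum_append, List.map_singleton, List.sum_singleton, isU,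
    List.getD_eq_getElem _ _ hi, pathHeight]

lemma pathHeight_length (x : List Bool) : pathHeight x x.length = 2 * x.count true - x.length := by
  rw [pathHeight, List.take_length]
  induction x with
  | nil => simp
  | cons b t ih =>
    cases b <;> simp only [List.map_cons, List.sum_cons, ih, stepVal, List.count_cons,
      List.length_cons] <;> push_cast <;> simp <;> ring

lemma countBefore_isD (hn : n ≤ x.length) : countBefore n (isD x) = (x.take n).count false := by
  induction n with
  | zero => simp [countBefore_zero]
  | succ n ih =>
    have hn' : n < x.length := by omega
    rw [countBefore_succ, ih hn'.le, List.take_add_one, List.getElem?_eq_getElem hn',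
      List.count_append, isD, List.getD_eq_getElem _ _ hn']
    cases x[n] <;> simp

def downAt (x : List Bool) (c : ℤ) (i : ℕ) : Bool := isD x i && decide (pathHeight x i = c)

def upAt (x : List Bool) (c : ℤ) (i : ℕ) : Bool := isU x i && decide (pathHeight x i = c)

def touchesDown (x : List Bool) (c : ℤ) (i : ℕ) : Bool :=
  isD x i && (decide (pathHeight x i = c) || decide (pathHeight x i = c + 1))

def touchesUp (x : List Bool) (c : ℤ) (i : ℕ) : Bool :=
  isU x i && (decide (pathHeight x i = c) || decide (pathHeight x i = c - 1))

lemma countBefore_touchesDown (x : List Bool) (c : ℤ) (n : ℕ) :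
    countBefore n (touchesDown x c) =
      countBefore n (downAt x c) + countBefore n (downAt x (c + 1)) := by
  rw [← countBefore_or fun i ⟨h₁, h₂⟩ => by
    simp only [downAt, Bool.and_eq_true, decide_eq_true_eq] at h₁ h₂; omega]
  exact countBefore_congr fun i _ => Bool.and_or_distrib_left ..

lemma countBefore_touchesUp (x : List Bool) (c : ℤ) (n : ℕ) :
    countBefore n (touchesUp x c) = countBefore n (upAt x c) + countBefore n (upAt x (c - 1)) := by
  rw [← countBefore_or fun i ⟨h₁, h₂⟩ => by
    simp only [upAt, Bool.and_eq_true, decide_eq_true_eq] at h₁ h₂; omega]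
  exact countBefore_congr fun i _ => Bool.and_or_distrib_left ..

/-- Between positions `m ≤ n`, the D-steps from `c + 1` and the U-steps from `c` are the down- and
up-crossings of the strip `[c, c + 1]`, so their difference is the change of `[c < height]`. -/
lemma crossings_balance (c : ℤ) (hmn : m ≤ n) (hn : n ≤ x.length) :
    (countBefore n (downAt x (c + 1)) : ℤ) + countBefore m (upAt x c) +
        (if c < pathHeight x n then 1 else 0) =
      countBefore m (downAt x (c + 1)) + countBefore n (upAt x c) +
        (if c < pathHeight x m then 1 else 0) := by
  induction n, hmn using Nat.le_induction with
  | base => ring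
  | succ n hmn ih =>
    have hn' : n < x.length := by omega
    have ih := ih hn'.le
    rw [countBefore_succ, countBefore_succ, pathHeight_succ hn']
    simp only [downAt, upAt, isD_eq_not_isU] at ih ⊢
    cases hU : isU x n <;>
      simp only [stepVal, Bool.not_true, Bool.not_false, Bool.true_and, Bool.false_and,
        Bool.toNat, Bool.cond_decide, cond_false, if_true] <;>
      push_cast <;> split_ifs at ih ⊢ <;> omega

end Path

section Flip

variable {x : List Bool} {p i : ℕ}

lemma isU_set_true (x : List Bool) (p i : ℕ) :
    isU (x.set p true) i = (decide (i = p) || isU x i) := by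
  simp only [isU, List.getD_eq_getElem?_getD, List.getElem?_set]
  by_cases h : i = p
  · subst h; by_cases hi : i < x.length <;> simp [hi]
  · simp [h, Ne.symm h]

lemma lt_length_of_isD (h : isD x p) : p < x.length := by
  by_contra! hp
  rw [isD, List.getD_eq_default _ _ hp] at h
  simp at h

lemma pathHeight_set_of_le (a : Bool) (h : i ≤ p) :
    pathHeight (x.set p a) i = pathHeight x i := by
  rw [pathHeight, List.take_set_of_le h, pathHeight]

lemma pathHeight_set_true_of_lt (hxp : isD x p) (hpi : p < i) (hi : i ≤ x.length) :
    pathHeight (x.set p true) i = pathHeight x i + 2 := by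
  have hU : isU x p = false := by simpa [isD_eq_not_isU] using hxp
  induction i, hpi using Nat.le_induction with
  | base =>
    rw [pathHeight_succ (by simpa using lt_length_of_isD hxp),
      pathHeight_succ (lt_length_of_isD hxp),
      pathHeight_set_of_le _ le_rfl, isU_set_true, hU]
    simp [stepVal]; ring
  | succ i hpi ih =>
    rw [pathHeight_succ (by simp; omega), pathHeight_succ (by omega), ih (by omega), isU_set_true,
      decide_eq_false (by omega), Bool.false_or]
    ring

lemma touchesUp_set_true_of_lt (c : ℤ) (h : i < p) :
    touchesUp (x.set p true) c i = touchesUp x c i := by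
  rw [touchesUp, touchesUp, isU_set_true, decide_eq_false h.ne, Bool.false_or,
    pathHeight_set_of_le _ h.le]

lemma ustart_set_true (hxp : isD x p) (c : ℤ) :
    (ustart (x.set p true) c : ℤ) =
      countBefore p (upAt x c) + (if pathHeight x p = c then 1 else 0) +
      countBefore x.length (upAt x (c - 2)) - countBefore (p + 1) (upAt x (c - 2)) := by
  have hp := lt_length_of_isD hxp
  have hprefix : countBefore p (upAt (x.set p true) c) = countBefore p (upAt x c) :=
    countBefore_congr fun i hi => by
      rw [upAt, upAt, isU_set_true, decide_eq_false hi.ne, Bool.false_or,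
        pathHeight_set_of_le _ hi.le]
  have hflip : upAt (x.set p true) c p = decide (pathHeight x p = c) := by
    rw [upAt, isU_set_true, pathHeight_set_of_le _ le_rfl]; simp
  have hsuffix := countBefore_add_countBefore_of_eqOn_Ico (q := upAt (x.set p true) c)
    (q' := upAt x (c - 2)) (show p + 1 ≤ x.length by omega) fun i hpi hi => by
      rw [upAt, upAt, isU_set_true, decide_eq_false (by omega), Bool.false_or,
        pathHeight_set_true_of_lt hxp hpi hi.le]
      congr 1; simp only [decide_eq_decide]; omega
  rw [countBefore_succ p (upAt (x.set p true) c), hprefix, hflip] at hsuffix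
  have : ustart (x.set p true) c = countBefore x.length (upAt (x.set p true) c) := by
    rw [ustart, List.length_set]; rfl
  rw [this]
  split_ifs with h <;> simp [h] at hsuffix <;> omega

end Flip

section GMap

variable {x : List Bool}

lemma exists_isD_one_le_pathHeight {k : ℕ} (hx : x ∈ LSet k k \ DyckSet k k) :
    ∃ i < x.length, isD x i ∧ 1 ≤ pathHeight x i := by
  obtain ⟨⟨hlen, hcnt⟩, hnotDyck⟩ := hx
  by_contra! hflaw
  refine hnotDyck ⟨hlen, hcnt, ?_⟩
  calc flaws x = countBefore x.length (isD x) :=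
        countBefore_congr fun i hi => by
          cases hD : isD x i
          · rfl
          · have := hflaw i hi hD
            simp only [Bool.true_and, decide_eq_true_eq]; omega
    _ = x.count false := by rw [countBefore_isD le_rfl, List.take_length]
    _ = k := by have := List.count_true_add_count_false x; omega

lemma gIdx_spec (hN : pathHeight x x.length = 0)
    (hup : ∃ i < x.length, isD x i ∧ 1 ≤ pathHeight x i) :
    gIdx x < x.length ∧ isD x (gIdx x) ∧
      (pathHeight x (gIdx x) = 0 ∨ pathHeight x (gIdx x) = 1) ∧
      countBefore (gIdx x) (downAt x 0) + countBefore (gIdx x) (downAt x 1) = dstart x 0 := by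
  obtain ⟨i₀, hi₀, hD, hh⟩ := hup
  -- a D-step from height ≥ 1 forces a later D-step from height 1 down to 0
  have hdown : countBefore i₀ (downAt x 1) < countBefore x.length (downAt x 1) := by
    have hcross := crossings_balance (x := x) 0 hi₀.le le_rfl
    have := countBefore_mono (q := upAt x 0) hi₀.le
    rw [hN, if_neg (lt_irrefl 0), if_pos (by omega), zero_add] at hcross
    omega
  have hlen : dstart x 0 < (dtouch x 0).length := by
    have := countBefore_touchesDown x 0 x.length
    rw [zero_add] at this
    change dstart x 0 < countBefore x.length (touchesDown x 0)
    rw [this]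
    exact Nat.lt_add_of_pos_right (by omega)
  obtain ⟨hp, hq, hcount⟩ := getD_filter_range_spec (touchesDown x 0) hlen
  rw [countBefore_touchesDown, zero_add] at hcount
  simp only [touchesDown, zero_add, Bool.and_eq_true, Bool.or_eq_true, decide_eq_true_eq] at hq
  exact ⟨hp, hq.1, hq.2, hcount⟩

lemma countBefore_touchesUp_set_true_eq_ustart {p : ℕ} (hN : pathHeight x x.length = 0)
    (hxp : isD x p) (hp01 : pathHeight x p = 0 ∨ pathHeight x p = 1)
    (hcount : countBefore p (downAt x 0) + countBefore p (downAt x 1) = dstart x 0) :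
    countBefore p (touchesUp (x.set p true) 1) = ustart (x.set p true) 1 ∧
      0 < ustart (x.set p true) 1 := by
  have hp := lt_length_of_isD hxp
  have hprefix : countBefore p (touchesUp (x.set p true) 1) =
      countBefore p (upAt x 1) + countBefore p (upAt x 0) := by
    rw [countBefore_congr fun i hi => touchesUp_set_true_of_lt 1 hi, countBefore_touchesUp,
      sub_self]
  have hust := ustart_set_true hxp 1
  have hcross₀ := crossings_balance (x := x) 0 (Nat.zero_le p) hp.le
  have hcross₁ := crossings_balance (x := x) (-1) (show p + 1 ≤ x.length by omega) le_rfl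
  have hdown : countBefore (p + 1) (downAt x 0) =
      countBefore p (downAt x 0) + (decide (pathHeight x p = 0)).toNat := by
    rw [countBefore_succ, downAt, hxp, Bool.true_and]
  have hstep : pathHeight x (p + 1) = pathHeight x p - 1 := by
    rw [pathHeight_succ hp, show isU x p = false by simpa [isD_eq_not_isU] using hxp]; rfl
  have hdstart : dstart x 0 = countBefore x.length (downAt x 0) := rfl
  norm_num [countBefore_zero, pathHeight_zero, hN, hstep] at hust hcross₀ hcross₁
  have := countBefore_mono (q := downAt x 0) (show p + 1 ≤ x.length by omega)
  rcases hp01 with h | h <;> simp [h] at hust hcross₀ hcross₁ hdown <;> omega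

end GMap

theorem hg_positions (k : ℕ) (x : List Bool) (hx : x ∈ LSet k k \ DyckSet k k) :
    hIdx (gMap x) < gIdx x ∧
    ∀ i, hIdx (gMap x) < i → i < gIdx x → i ∉ utouch x 1 ∧ i ∉ utouch (gMap x) 1 := by
  have hN : pathHeight x x.length = 0 := by
    obtain ⟨⟨hlen, hcnt⟩, -⟩ := hx
    rw [pathHeight_length, hlen, hcnt]; push_cast; ring
  obtain ⟨hp, hpD, hp01, hcount⟩ := gIdx_spec hN (exists_isD_one_le_pathHeight hx)
  obtain ⟨hprefix, hpos⟩ := countBefore_touchesUp_set_true_eq_ustart hN hpD hp01 hcount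
  set p := gIdx x
  have hutouch : utouch (gMap x) 1 = (List.range x.length).filter (touchesUp (x.set p true) 1) := by
    rw [gMap, utouch, List.length_set]; rfl
  obtain ⟨hlt, hgap⟩ := getD_filter_range_of_countBefore_eq hp.le
    (show countBefore p (touchesUp (x.set p true) 1) = (ustart (gMap x) 1 - 1) + 1 by
      rw [hprefix]; exact (Nat.sub_add_cancel hpos).symm)
  rw [← hutouch] at hlt hgap
  refine ⟨hlt, fun i hi hip => ⟨?_, ?_⟩⟩
  · change i ∉ (List.range x.length).filter (touchesUp x 1)
    rw [List.mem_filter, ← touchesUp_set_true_of_lt 1 hip, hgap i hi hip]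
    simp
  · simp [hutouch, hgap i hi hip]
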